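/- For every w ∈ ℝ^d, ‖∇l_T(w) − G(w)‖ ≤ ((1 + αL)^N − 1) ‖∇l_T(w)‖ + (1 + αL)^N ((1 + αL)^N − 1) ‖∇l_S(w)‖. -/

import Mathlib

/-!
Write `xⱼ` for the inner path and `P = ∏ⱼ (I - α ∇²l_S(xⱼ))`, so that
`∇l_T(w) - G(w) = (I - P) ∇l_T(w) + P (∇l_T(w) - ∇l_T(x_N))`.
Since `‖∇²l_S‖ ≤ L`, each factor of `P` is within `αL` of `I`, whence `‖P‖ ≤ (1 + αL)^N` and
`‖P - I‖ ≤ (1 + αL)^N - 1`. Along the path the gradient of `l_S` grows by at most a factor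
`1 + αL` per step, so `L ‖w - x_N‖ ≤ αL ∑_{j<N} (1 + αL)^j ‖∇l_S(w)‖ = ((1 + αL)^N - 1) ‖∇l_S(w)‖`,
and the Lipschitz bound on `∇l_T` finishes the second term.
-/

open MeasureTheory

noncomputable def innerPath {d : ℕ} (α : ℝ) (l : EuclideanSpace ℝ (Fin d) → ℝ) :
    ℕ → EuclideanSpace ℝ (Fin d) → EuclideanSpace ℝ (Fin d)
  | 0, w => w
  | j + 1, w => innerPath α l j w - α • gradient l (innerPath α l j w)

noncomputable def hessProd {d : ℕ} (α : ℝ) (N : ℕ)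
    (lS : EuclideanSpace ℝ (Fin d) → ℝ) (w : EuclideanSpace ℝ (Fin d)) :
    EuclideanSpace ℝ (Fin d) →L[ℝ] EuclideanSpace ℝ (Fin d) :=
  ((List.range N).map fun j =>
    ContinuousLinearMap.id ℝ (EuclideanSpace ℝ (Fin d)) -
      α • fderiv ℝ (gradient lS) (innerPath α lS j w)).prod

noncomputable def metaGrad {d : ℕ} (α : ℝ) (N : ℕ)
    (lS lT : EuclideanSpace ℝ (Fin d) → ℝ) (w : EuclideanSpace ℝ (Fin d)) :
    EuclideanSpace ℝ (Fin d) :=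
  hessProd α N lS w (gradient lT (innerPath α lS N w))

section NormedRing

variable {R : Type*} [NormedRing R]

theorem List.norm_prod_sub_one_le (l : List R) (h1 : ‖(1 : R)‖ ≤ 1) {a : ℝ} (ha : 0 ≤ a)
    (hl : ∀ x ∈ l, ‖x - 1‖ ≤ a) : ‖l.prod - 1‖ ≤ (1 + a) ^ l.length - 1 := by
  induction l with
  | nil => simp
  | cons x l ih =>
    have ih := ih fun y hy => hl y (List.mem_cons_of_mem x hy)
    have hprod : ‖l.prod‖ ≤ (1 + a) ^ l.length := by
      linarith [norm_le_norm_sub_add l.prod 1]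
    calc ‖(x :: l).prod - 1‖ = ‖(x - 1) * l.prod + (l.prod - 1)‖ := by
          rw [List.prod_cons]; congr 1; noncomm_ring
      _ ≤ ‖x - 1‖ * ‖l.prod‖ + ‖l.prod - 1‖ := norm_add_le_of_le (norm_mul_le _ _) le_rfl
      _ ≤ a * (1 + a) ^ l.length + ((1 + a) ^ l.length - 1) := by
          gcongr
          exact hl x List.mem_cons_self
      _ = (1 + a) ^ (x :: l).length - 1 := by rw [List.length_cons, pow_succ]; ring

theorem List.norm_prod_le_of_norm_sub_one_le (l : List R) (h1 : ‖(1 : R)‖ ≤ 1) {a : ℝ}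
    (ha : 0 ≤ a) (hl : ∀ x ∈ l, ‖x - 1‖ ≤ a) : ‖l.prod‖ ≤ (1 + a) ^ l.length := by
  linarith [norm_le_norm_sub_add l.prod 1, l.norm_prod_sub_one_le h1 ha hl]

end NormedRing

section GradientDescent

variable {d : ℕ} {α : ℝ} {K : NNReal} {lS : EuclideanSpace ℝ (Fin d) → ℝ}

theorem norm_innerPath_succ_sub (hα : 0 ≤ α) (j : ℕ) (w : EuclideanSpace ℝ (Fin d)) :
    ‖innerPath α lS (j + 1) w - innerPath α lS j w‖ = α * ‖gradient lS (innerPath α lS j w)‖ := by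
  rw [innerPath, sub_sub_cancel_left, norm_neg, norm_smul, Real.norm_of_nonneg hα]

theorem norm_gradient_innerPath_le (hα : 0 ≤ α) (hK : LipschitzWith K (gradient lS))
    (w : EuclideanSpace ℝ (Fin d)) :
    ∀ j, ‖gradient lS (innerPath α lS j w)‖ ≤ (1 + α * K) ^ j * ‖gradient lS w‖
  | 0 => by simp [innerPath]
  | j + 1 => by
    set x := innerPath α lS j w
    calc ‖gradient lS (innerPath α lS (j + 1) w)‖
        ≤ ‖gradient lS x‖ + ‖gradient lS (innerPath α lS (j + 1) w) - gradient lS x‖ :=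
          norm_le_insert' _ _
      _ ≤ ‖gradient lS x‖ + K * (α * ‖gradient lS x‖) := by
          rw [← norm_innerPath_succ_sub hα]
          gcongr
          exact hK.norm_sub_le _ _
      _ = (1 + α * K) * ‖gradient lS x‖ := by ring
      _ ≤ (1 + α * K) * ((1 + α * K) ^ j * ‖gradient lS w‖) := by
          gcongr
          exact norm_gradient_innerPath_le hα hK w j
      _ = (1 + α * K) ^ (j + 1) * ‖gradient lS w‖ := by ring

theorem mul_norm_sub_innerPath_le (hα : 0 ≤ α) (hK : LipschitzWith K (gradient lS))
    (w : EuclideanSpace ℝ (Fin d)) :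
    ∀ N, K * ‖w - innerPath α lS N w‖ ≤ ((1 + α * K) ^ N - 1) * ‖gradient lS w‖
  | 0 => by simp [innerPath]
  | N + 1 => by
    set x := innerPath α lS N w
    calc K * ‖w - innerPath α lS (N + 1) w‖
        ≤ K * (‖w - x‖ + ‖innerPath α lS (N + 1) w - x‖) := by
          gcongr
          rw [norm_sub_rev (innerPath α lS (N + 1) w)]
          exact norm_sub_le_norm_sub_add_norm_sub _ _ _
      _ ≤ ((1 + α * K) ^ N - 1) * ‖gradient lS w‖
            + K * (α * ((1 + α * K) ^ N * ‖gradient lS w‖)) := by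
          rw [mul_add, norm_innerPath_succ_sub hα]
          gcongr ?_ + _ * (_ * ?_)
          · exact mul_norm_sub_innerPath_le hα hK w N
          · exact norm_gradient_innerPath_le hα hK w N
      _ = ((1 + α * K) ^ (N + 1) - 1) * ‖gradient lS w‖ := by ring

theorem norm_hessProd_factor_sub_one_le (hα : 0 ≤ α) (hK : LipschitzWith K (gradient lS))
    (x : EuclideanSpace ℝ (Fin d)) :
    ‖(ContinuousLinearMap.id ℝ (EuclideanSpace ℝ (Fin d)) -
      α • fderiv ℝ (gradient lS) x) - 1‖ ≤ α * K := by
  rw [ContinuousLinearMap.one_def, sub_sub_cancel_left, norm_neg, norm_smul,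
    Real.norm_of_nonneg hα]
  exact mul_le_mul_of_nonneg_left (norm_fderiv_le_of_lipschitz ℝ hK) hα

theorem norm_hessProd_sub_one_le (hα : 0 ≤ α) (hK : LipschitzWith K (gradient lS))
    (N : ℕ) (w : EuclideanSpace ℝ (Fin d)) :
    ‖hessProd α N lS w - 1‖ ≤ (1 + α * K) ^ N - 1 := by
  rw [hessProd]
  refine le_of_le_of_eq (List.norm_prod_sub_one_le _ ContinuousLinearMap.norm_id_le (a := α * K)
    (by positivity) ?_) (by simp)
  simpa using fun j _ => norm_hessProd_factor_sub_one_le hα hK (innerPath α lS j w)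

theorem norm_hessProd_le (hα : 0 ≤ α) (hK : LipschitzWith K (gradient lS))
    (N : ℕ) (w : EuclideanSpace ℝ (Fin d)) :
    ‖hessProd α N lS w‖ ≤ (1 + α * K) ^ N := by
  rw [hessProd]
  refine le_of_le_of_eq (List.norm_prod_le_of_norm_sub_one_le _ ContinuousLinearMap.norm_id_le
    (a := α * K) (by positivity) ?_) (by simp)
  simpa using fun j _ => norm_hessProd_factor_sub_one_le hα hK (innerPath α lS j w)

end GradientDescent

theorem stmt12_general {d : ℕ} (α L : ℝ) (hα : 0 < α) (hL : 0 < L)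
    (N : ℕ)
    (lS lT : EuclideanSpace ℝ (Fin d) → ℝ)
    (hgradS : ∀ w u : EuclideanSpace ℝ (Fin d), ‖gradient lS w - gradient lS u‖ ≤ L * ‖w - u‖)
    (hgradT : ∀ w u : EuclideanSpace ℝ (Fin d), ‖gradient lT w - gradient lT u‖ ≤ L * ‖w - u‖) :
    ∀ w : EuclideanSpace ℝ (Fin d),
      ‖gradient lT w - metaGrad α N lS lT w‖ ≤
        ((1 + α * L) ^ N - 1) * ‖gradient lT w‖ +
          (1 + α * L) ^ N * ((1 + α * L) ^ N - 1) * ‖gradient lS w‖ := by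
  intro w
  rw [metaGrad]
  lift L to NNReal using hL.le
  have hS : LipschitzWith L (gradient lS) := LipschitzWith.of_dist_le_mul fun w u => by
    simpa only [dist_eq_norm] using hgradS w u
  set P := hessProd α N lS w
  set g := gradient lT w
  set gN := gradient lT (innerPath α lS N w)
  have hdecomp : g - P gN = (1 - P) g + P (g - gN) := by
    simp only [sub_apply, one_apply_eq_self, map_sub, sub_add_sub_cancel]
  have hP : ‖P‖ ≤ (1 + α * L) ^ N := norm_hessProd_le hα.le hS N w
  calc ‖g - P gN‖ ≤ ‖1 - P‖ * ‖g‖ + ‖P‖ * ‖g - gN‖ := by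
        rw [hdecomp]; exact norm_add_le_of_le ((1 - P).le_opNorm g) (P.le_opNorm _)
    _ ≤ ((1 + α * L) ^ N - 1) * ‖g‖ + (1 + α * L) ^ N * (L * ‖w - innerPath α lS N w‖) := by
        rw [norm_sub_rev]
        gcongr
        · exact norm_hessProd_sub_one_le hα.le hS N w
        · exact hgradT _ _
    _ ≤ ((1 + α * L) ^ N - 1) * ‖g‖
          + (1 + α * L) ^ N * (((1 + α * L) ^ N - 1) * ‖gradient lS w‖) := by
        gcongr _ + _ * ?_
        exact mul_norm_sub_innerPath_le hα.le hS w N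
    _ = _ := by ring

theorem stmt12 {d : ℕ} (hd : 1 ≤ d) (α L : ℝ) (hα : 0 < α) (hL : 0 < L)
    (N : ℕ) (hN : 1 ≤ N)
    (lS lT : EuclideanSpace ℝ (Fin d) → ℝ) (hlS : ContDiff ℝ 2 lS) (hlT : ContDiff ℝ 2 lT)
    (hgradS : ∀ w u : EuclideanSpace ℝ (Fin d), ‖gradient lS w - gradient lS u‖ ≤ L * ‖w - u‖)
    (hgradT : ∀ w u : EuclideanSpace ℝ (Fin d), ‖gradient lT w - gradient lT u‖ ≤ L * ‖w - u‖) :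
    ∀ w : EuclideanSpace ℝ (Fin d),
      ‖gradient lT w - metaGrad α N lS lT w‖ ≤
        ((1 + α * L) ^ N - 1) * ‖gradient lT w‖ +
          (1 + α * L) ^ N * ((1 + α * L) ^ N - 1) * ‖gradient lS w‖ :=
  stmt12_general α L hα hL N lS lT hgradS hgradT
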